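/- For s ∈ SL(2,ℝ), the linear map P_s : sl(2,ℝ) → sl(2,ℝ), P_s(u) = ½( σ(s)⁻¹ σ(u) σ(s) − s σ(u) s⁻¹ ), is the zero map if and only if s lies in the orbit of the identity under the twisted action (g,s) ↦ g s σ(g)⁻¹, i.e. if and only if there exists g ∈ SL(2,ℝ) with s = g H g⁻¹ H. -/

import Mathlib

/-!
Writing `s = [[a, b], [c, d]]`, a direct computation gives
`P_s(u) = ((a - d) / 2) • Q_s(u)` with `Q_s` linear in `u`, and `Q_s` cannot vanish on `sl(2,ℝ)`
when `det s = 1`; so `P_s = 0` iff `a = d`, i.e. `tr (s H) = 0`.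

The orbit of the identity is contained in this set since `s H = g H g⁻¹` has the trace of `H`.
Conversely, if `a = d` then `s H s = H`, so both `1 + s` and `(s - 1) W`, with
`W = [[0, 1], [-1, 0]]` anticommuting with `H`, intertwine `s H` with `H`. Their determinants
are `2 + tr s` and `2 - tr s`, so one of them is positive, and rescaling it gives `g ∈ SL(2,ℝ)`
with `s H g = g H`, i.e. `s = g H g⁻¹ H`.
-/

/-- H = [[1,0],[0,−1]]. -/
noncomputable def Hmat : Matrix (Fin 2) (Fin 2) ℝ := !![1, 0; 0, -1]

/-- The bivector P_S^σ(s): P_s(u) = ½(σ(s)⁻¹ σ(u) σ(s) − s σ(u) s⁻¹),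
with σ(m) = H m H. -/
noncomputable def Pbiv (s u : Matrix (Fin 2) (Fin 2) ℝ) : Matrix (Fin 2) (Fin 2) ℝ :=
  (2:ℝ)⁻¹ • ((Hmat * s * Hmat)⁻¹ * (Hmat * u * Hmat) * (Hmat * s * Hmat)
    - s * (Hmat * u * Hmat) * s⁻¹)

open Matrix

lemma inv_fin_two_of_det_eq_one {R : Type*} [CommRing R] {a b c d : R} (h : a * d - b * c = 1) :
    (!![a, b; c, d])⁻¹ = !![d, -b; -c, a] := by
  rw [inv_def, det_fin_two_of, h, Ring.inverse_one, one_smul, adjugate_fin_two_of]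

lemma Hmat_mul_self : Hmat * Hmat = 1 := by
  simp [Hmat, one_fin_two]

lemma trace_mul_Hmat (s : Matrix (Fin 2) (Fin 2) ℝ) : trace (s * Hmat) = s 0 0 - s 1 1 := by
  simp [Hmat, trace_fin_two, mul_apply, sub_eq_add_neg]

lemma Pbiv_fin_two {a b c d : ℝ} (h : a * d - b * c = 1) (x y z : ℝ) :
    Pbiv !![a, b; c, d] !![x, y; z, -x] =
      ((a - d) / 2) • !![-(c * y + b * z), 2 * b * x + (a + d) * y;
        2 * c * x - (a + d) * z, c * y + b * z] := by
  have hσs : Hmat * !![a, b; c, d] * Hmat = !![a, -b; -c, d] := by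
    simp [Hmat]
  have hσu : Hmat * !![x, y; z, -x] * Hmat = !![x, -y; -z, -x] := by
    simp [Hmat]
  rw [Pbiv, hσs, hσu, inv_fin_two_of_det_eq_one h,
    inv_fin_two_of_det_eq_one (by linear_combination h), neg_neg, neg_neg]
  ext i j
  fin_cases i <;> fin_cases j <;> simp <;> ring

lemma forall_traceless_Pbiv_eq_zero_iff {s : Matrix (Fin 2) (Fin 2) ℝ} (hs : s.det = 1) :
    (∀ u : Matrix (Fin 2) (Fin 2) ℝ, u.trace = 0 → Pbiv s u = 0) ↔ s 0 0 = s 1 1 := by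
  obtain ⟨a, b, c, d, rfl⟩ : ∃ a b c d, s = !![a, b; c, d] := ⟨_, _, _, _, eta_fin_two s⟩
  rw [det_fin_two_of] at hs
  simp only [of_apply, cons_val', cons_val_zero, cons_val_one, empty_val', cons_val_fin_one]
  constructor
  · intro h
    by_contra had
    have hne : (a - d) / 2 ≠ 0 := by simpa [sub_eq_zero] using had
    have hQ x y z := (smul_eq_zero.mp (Pbiv_fin_two hs x y z ▸ h !![x, y; z, -x]
      (by simp [trace_fin_two_of]))).resolve_left hne
    have hc : c = 0 := by simpa using congrFun₂ (hQ 0 1 0) 0 0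
    have hb : b = 0 := by simpa using congrFun₂ (hQ 0 0 1) 0 0
    have hda : a + d = 0 := by simpa using congrFun₂ (hQ 0 1 0) 0 1
    rw [hb, hc, eq_neg_of_add_eq_zero_right hda] at hs
    nlinarith [sq_nonneg a]
  · rintro rfl u hu
    have hu₁₁ : u 1 1 = -u 0 0 := by rw [trace_fin_two] at hu; linarith
    rw [eta_fin_two u, hu₁₁, Pbiv_fin_two hs, sub_self, zero_div, zero_smul]

lemma mul_Hmat_mul_self_eq_Hmat {s : Matrix (Fin 2) (Fin 2) ℝ} (hs : s.det = 1)
    (had : s 0 0 = s 1 1) :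
    s * Hmat * s = Hmat := by
  obtain ⟨a, b, c, d, rfl⟩ : ∃ a b c d, s = !![a, b; c, d] := ⟨_, _, _, _, eta_fin_two s⟩
  simp only [of_apply, cons_val', cons_val_zero, cons_val_one, empty_val', cons_val_fin_one] at had
  subst had
  rw [det_fin_two_of] at hs
  ext i j
  fin_cases i <;> fin_cases j <;> simp [Hmat] <;> linarith

lemma exists_smul_det_eq_one {g : Matrix (Fin 2) (Fin 2) ℝ} (hg : 0 < g.det) :
    ∃ c : ℝ, (c • g).det = 1 :=
  ⟨(√g.det)⁻¹, by
    rw [det_smul, Fintype.card_fin, inv_pow, Real.sq_sqrt hg.le, inv_mul_cancel₀ hg.ne']⟩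

lemma exists_det_eq_one_mul_Hmat_eq {s : Matrix (Fin 2) (Fin 2) ℝ} (hs : s.det = 1)
    (hsHs : s * Hmat * s = Hmat) :
    ∃ g : Matrix (Fin 2) (Fin 2) ℝ, g.det = 1 ∧ s * Hmat * g = g * Hmat := by
  set W : Matrix (Fin 2) (Fin 2) ℝ := !![0, 1; -1, 0]
  have hW : W * Hmat = -(Hmat * W) := by simp [W, Hmat]
  have h₁ : s * Hmat * (1 + s) = (1 + s) * Hmat := by
    rw [mul_add, mul_one, hsHs, add_mul, one_mul, add_comm]
  have h₂ : s * Hmat * ((s - 1) * W) = (s - 1) * W * Hmat :=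
    calc s * Hmat * ((s - 1) * W) = (s * Hmat * s - s * Hmat) * W := by noncomm_ring
      _ = -((s - 1) * (Hmat * W)) := by rw [hsHs]; noncomm_ring
      _ = (s - 1) * W * Hmat := by rw [mul_assoc, hW, mul_neg]
  have hdet : (1 + s).det + ((s - 1) * W).det = 4 := by
    rw [det_mul, show W.det = 1 by simp [W], mul_one, det_fin_two, det_fin_two (s - 1)]
    rw [det_fin_two] at hs
    simp only [Matrix.add_apply, Matrix.sub_apply, one_apply_eq, one_apply_ne zero_ne_one,
      one_apply_ne one_ne_zero]
    linear_combination 2 * hs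
  have rescale : ∀ g, 0 < g.det → s * Hmat * g = g * Hmat →
      ∃ g' : Matrix (Fin 2) (Fin 2) ℝ, g'.det = 1 ∧ s * Hmat * g' = g' * Hmat := by
    intro g hg hsg
    obtain ⟨c, hc⟩ := exists_smul_det_eq_one hg
    exact ⟨c • g, hc, by rw [Matrix.mul_smul, hsg, Matrix.smul_mul]⟩
  obtain hpos | hnonpos := lt_or_ge 0 (1 + s).det
  · exact rescale _ hpos h₁
  · exact rescale _ (by linarith) h₂

theorem stmt_12 (s : Matrix (Fin 2) (Fin 2) ℝ) (hs : s.det = 1) :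
    (∀ u : Matrix (Fin 2) (Fin 2) ℝ, u.trace = 0 → Pbiv s u = 0) ↔
    ∃ g : Matrix (Fin 2) (Fin 2) ℝ, g.det = 1 ∧ s = g * Hmat * g⁻¹ * Hmat := by
  rw [forall_traceless_Pbiv_eq_zero_iff hs]
  constructor
  · intro had
    obtain ⟨g, hg, hsg⟩ := exists_det_eq_one_mul_Hmat_eq hs (mul_Hmat_mul_self_eq_Hmat hs had)
    refine ⟨g, hg, ?_⟩
    calc s = s * Hmat * g * g⁻¹ * Hmat := by
          rw [mul_nonsing_inv_cancel_right _ _ (by simp [hg]), mul_assoc, Hmat_mul_self, mul_one]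
      _ = g * Hmat * g⁻¹ * Hmat := by rw [hsg]
  · rintro ⟨g, hg, rfl⟩
    have hg' : IsUnit g := (isUnit_iff_isUnit_det g).mpr (by simp [hg])
    rw [← sub_eq_zero, ← trace_mul_Hmat, mul_assoc _ Hmat Hmat, Hmat_mul_self, mul_one,
      trace_conj hg']
    simp [Hmat, trace_fin_two_of]
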